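/- Let G be a Lie group acting smoothly on a smooth boundaryless Hausdorff manifold M, let X be a smooth (C^∞) G-equivariant vector field on M with a relative equilibrium at m ∈ M with velocity ξ ∈ 𝔤 (i.e., X(m) = T ev_m(ξ)), and let γ : ℝ → G be a smooth group homomorphism with derivative ξ at 0 (γ plays the role of τ ↦ exp(τξ)). Then for every τ ∈ ℝ, the element γ(τ) lies in the normalizer in G of the stabilizer subgroup G_m of m. -/

import Mathlib

open scoped Manifold

/-!
The curve `c τ = γ τ • m` satisfies `c (t + s) = γ t • c s`, so equivariance of `X` propagates
the relative-equilibrium condition `c' 0 = X m` to every time: `c` is an integral curve of `X`.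
For `h` in the stabilizer of `m`, the curve `h • c` is again an integral curve of `X` (equivariance)
starting at `m`, hence equals `c` by uniqueness of integral curves. Thus `G_m` fixes every
`γ τ • m`, in particular `γ τ • m` and `(γ τ)⁻¹ • m = γ (-τ) • m`, i.e. `G_m` is contained in both
`γ τ G_m (γ τ)⁻¹` and `(γ τ)⁻¹ G_m γ τ`.
-/

namespace MulAction

theorem mem_normalizer_stabilizer_of_le {G α : Type*} [Group G] [MulAction G α] {a : α} {g : G}
    (h₁ : stabilizer G a ≤ stabilizer G (g • a)) (h₂ : stabilizer G a ≤ stabilizer G (g⁻¹ • a)) :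
    g ∈ Subgroup.normalizer (stabilizer G a : Set G) := by
  refine Subgroup.mem_normalizer_iff.mpr fun h => ⟨fun hh => ?_, fun hh => ?_⟩
  · have hfix : h • g⁻¹ • a = g⁻¹ • a := h₂ hh
    rw [mem_stabilizer_iff, mul_smul, mul_smul, hfix, smul_inv_smul]
  · have hfix : (g * h * g⁻¹) • g • a = g • a := h₁ hh
    rw [mul_smul, mul_smul, inv_smul_smul] at hfix
    exact smul_left_cancel g hfix

end MulAction

section IntegralCurve

variable {E : Type*} [NormedAddCommGroup E] [NormedSpace ℝ E]
  {H : Type*} [TopologicalSpace H] {I : ModelWithCorners ℝ E H}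
  {M : Type*} [TopologicalSpace M] [ChartedSpace H M]
  {E' : Type*} [NormedAddCommGroup E'] [NormedSpace ℝ E']
  {H' : Type*} [TopologicalSpace H'] {I' : ModelWithCorners ℝ E' H'}
  {M' : Type*} [TopologicalSpace M'] [ChartedSpace H' M']

theorem MDifferentiableAt.hasMFDerivAt_comp_curve {f : M → M'} {γ : ℝ → M} {t : ℝ}
    {v : TangentSpace I (γ t)} (hf : MDifferentiableAt I I' f (γ t))
    (hγ : HasMFDerivAt 𝓘(ℝ, ℝ) I γ t ((1 : ℝ →L[ℝ] ℝ).smulRight v)) :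
    HasMFDerivAt 𝓘(ℝ, ℝ) I' (f ∘ γ) t
      ((1 : ℝ →L[ℝ] ℝ).smulRight (mfderiv I I' f (γ t) v)) := by
  refine (hf.hasMFDerivAt.comp t hγ).congr_mfderiv (ContinuousLinearMap.ext_ring ?_)
  change mfderiv I I' f (γ t) ((1 : ℝ) • v) = (1 : ℝ) • mfderiv I I' f (γ t) v
  simp only [one_smul]

theorem IsMIntegralCurve.comp_of_mfderiv_eq {f : M → M'} {v : (x : M) → TangentSpace I x}
    {v' : (y : M') → TangentSpace I' y} {γ : ℝ → M} (hγ : IsMIntegralCurve γ v)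
    (hf : MDifferentiable I I' f) (hfv : ∀ x, v' (f x) = mfderiv I I' f x (v x)) :
    IsMIntegralCurve (f ∘ γ) v' := fun t => by
  rw [Function.comp_apply, hfv]
  exact (hf (γ t)).hasMFDerivAt_comp_curve (hγ t)

section Action

variable {G : Type*} [Group G] [MulAction G M] {X : (x : M) → TangentSpace I x}

theorem IsMIntegralCurve.stabilizer_le [IsManifold I 1 M] [T2Space M] [BoundarylessManifold I M]
    (hsmul : ∀ g : G, MDifferentiable I I (g • · : M → M))
    (hX_equiv : ∀ (g : G) (p : M), X (g • p) = mfderiv I I (g • ·) p (X p))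
    (hX : ContMDiff I I.tangent 1 fun x => (⟨x, X x⟩ : TangentBundle I M))
    {c : ℝ → M} (hc : IsMIntegralCurve c X) (s t : ℝ) :
    MulAction.stabilizer G (c s) ≤ MulAction.stabilizer G (c t) := fun h hh =>
  congrFun (isMIntegralCurve_Ioo_eq_of_contMDiff_boundaryless (t₀ := s) hX
    (hc.comp_of_mfderiv_eq (hsmul h) (hX_equiv h)) hc hh) t

theorem isMIntegralCurve_smul_of_hasMFDerivAt_zero
    (hsmul : ∀ g : G, MDifferentiable I I (g • · : M → M))
    (hX_equiv : ∀ (g : G) (p : M), X (g • p) = mfderiv I I (g • ·) p (X p))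
    {γ : ℝ → G} (hγ_hom : ∀ s t, γ (s + t) = γ s * γ t) {m : M}
    (h0 : HasMFDerivAt 𝓘(ℝ, ℝ) I (fun τ => γ τ • m) 0
      ((1 : ℝ →L[ℝ] ℝ).smulRight (X (γ 0 • m)))) :
    IsMIntegralCurve (fun τ => γ τ • m) X := by
  intro t
  have hsub : HasMFDerivAt 𝓘(ℝ, ℝ) 𝓘(ℝ, ℝ) (· - t) t (ContinuousLinearMap.id ℝ ℝ) :=
    ((hasFDerivAt_id t).sub_const t).hasMFDerivAt
  have h0t : HasMFDerivAt 𝓘(ℝ, ℝ) I (fun τ => γ τ • m) (t - t)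
      ((1 : ℝ →L[ℝ] ℝ).smulRight (X (γ (t - t) • m))) := by
    rwa [sub_self]
  have hshift : HasMFDerivAt 𝓘(ℝ, ℝ) I ((fun τ => γ τ • m) ∘ (· - t)) t
      ((1 : ℝ →L[ℝ] ℝ).smulRight (X (γ (t - t) • m))) :=
    (h0t.comp (f := (· - t)) t hsub).congr_mfderiv (ContinuousLinearMap.ext_ring rfl)
  have hfun : (fun τ => γ τ • m) = (γ t • ·) ∘ (fun τ => γ τ • m) ∘ (· - t) := by
    funext τ
    simp only [Function.comp_apply, smul_smul, ← hγ_hom, add_sub_cancel]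
  rw [hfun, Function.comp_apply, hX_equiv]
  exact (hsmul (γ t) _).hasMFDerivAt_comp_curve hshift

end Action

end IntegralCurve

theorem one_parameter_subgroup_mem_normalizer_of_stabilizer_general
    {EG : Type*} [NormedAddCommGroup EG] [NormedSpace ℝ EG]
    {HG : Type*} [TopologicalSpace HG] {IG : ModelWithCorners ℝ EG HG}
    {G : Type*} [TopologicalSpace G] [ChartedSpace HG G] [Group G]
    {EM : Type*} [NormedAddCommGroup EM] [NormedSpace ℝ EM]
    {HM : Type*} [TopologicalSpace HM] {IM : ModelWithCorners ℝ EM HM}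
    {M : Type*} [TopologicalSpace M] [ChartedSpace HM M] [IsManifold IM (⊤ : ℕ∞) M]
    [T2Space M] [BoundarylessManifold IM M]
    [MulAction G M]
    (hact : ContMDiff (IG.prod IM) IM (⊤ : ℕ∞) fun p : G × M => p.1 • p.2)
    (X : (x : M) → TangentSpace IM x)
    (hX_smooth : ContMDiff IM IM.tangent (⊤ : ℕ∞)
      fun x : M => (⟨x, X x⟩ : TangentBundle IM M))
    (hX_equiv : ∀ (g : G) (p : M), X (g • p) = mfderiv IM IM (fun q : M => g • q) p (X p))
    (m : M) (ξ : TangentSpace IG (1 : G))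
    (hrel : X m = mfderiv IG IM (fun g : G => g • m) (1 : G) ξ)
    (γ : ℝ → G)
    (hγ_smooth : ContMDiff 𝓘(ℝ, ℝ) IG (⊤ : ℕ∞) γ)
    (hγ_one : γ 0 = 1)
    (hγ_hom : ∀ s t : ℝ, γ (s + t) = γ s * γ t)
    (hγ_deriv : mfderiv 𝓘(ℝ, ℝ) IG γ 0 (1 : ℝ) = ξ) :
    ∀ τ : ℝ, γ τ ∈ Subgroup.normalizer (MulAction.stabilizer G m : Set G) := by
  have hsmul : ∀ g : G, MDifferentiable IM IM (g • · : M → M) := fun g =>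
    (hact.comp (contMDiff_const.prodMk contMDiff_id)).mdifferentiable (by simp)
  have hev : MDifferentiableAt IG IM (· • m : G → M) (γ 0) :=
    (hact.comp (contMDiff_id.prodMk contMDiff_const)).mdifferentiableAt (by simp)
  have hγ : HasMFDerivAt 𝓘(ℝ, ℝ) IG γ 0 ((1 : ℝ →L[ℝ] ℝ).smulRight ξ) :=
    (hγ_smooth.mdifferentiableAt (by simp)).hasMFDerivAt.congr_mfderiv
      (ContinuousLinearMap.ext_ring (hγ_deriv.trans (one_smul ℝ ξ).symm))
  have h0 := hev.hasMFDerivAt_comp_curve hγ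
  rw [hγ_one, ← hrel] at h0
  have hc : IsMIntegralCurve (fun τ => γ τ • m) X :=
    isMIntegralCurve_smul_of_hasMFDerivAt_zero hsmul hX_equiv hγ_hom (by rwa [hγ_one, one_smul])
  have hstab := hc.stabilizer_le hsmul hX_equiv (hX_smooth.of_le (by simp)) 0
  intro τ
  have hinv : γ (-τ) = (γ τ)⁻¹ :=
    eq_inv_of_mul_eq_one_left (by rw [← hγ_hom, neg_add_cancel, hγ_one])
  refine MulAction.mem_normalizer_stabilizer_of_le ?_ ?_
  · simpa only [hγ_one, one_smul] using hstab τ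
  · simpa only [hγ_one, one_smul, hinv] using hstab (-τ)

/-- Let `G` be a Lie group acting smoothly on a smooth boundaryless Hausdorff
manifold `M`, let `X` be a smooth `G`-equivariant vector field on `M` with a relative
equilibrium at `m` with velocity `ξ ∈ 𝔤` (`X m = T ev_m ξ`), and let `γ : ℝ → G` be a smooth
group homomorphism with derivative `ξ` at `0` (playing the role of `τ ↦ exp (τ ξ)`).  Then for
every `τ`, the element `γ τ` lies in the normalizer in `G` of the stabilizer of `m`. -/
theorem one_parameter_subgroup_mem_normalizer_of_stabilizer
    {EG : Type*} [NormedAddCommGroup EG] [NormedSpace ℝ EG]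
    {HG : Type*} [TopologicalSpace HG] {IG : ModelWithCorners ℝ EG HG}
    {G : Type*} [TopologicalSpace G] [ChartedSpace HG G] [Group G]
    [IsManifold IG (⊤ : ℕ∞) G] [LieGroup IG (⊤ : ℕ∞) G]
    {EM : Type*} [NormedAddCommGroup EM] [NormedSpace ℝ EM]
    {HM : Type*} [TopologicalSpace HM] {IM : ModelWithCorners ℝ EM HM}
    {M : Type*} [TopologicalSpace M] [ChartedSpace HM M] [IsManifold IM (⊤ : ℕ∞) M]
    [T2Space M] [BoundarylessManifold IM M]
    [MulAction G M]
    (hact : ContMDiff (IG.prod IM) IM (⊤ : ℕ∞) fun p : G × M => p.1 • p.2)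
    (X : (x : M) → TangentSpace IM x)
    (hX_smooth : ContMDiff IM IM.tangent (⊤ : ℕ∞)
      fun x : M => (⟨x, X x⟩ : TangentBundle IM M))
    (hX_equiv : ∀ (g : G) (p : M), X (g • p) = mfderiv IM IM (fun q : M => g • q) p (X p))
    (m : M) (ξ : TangentSpace IG (1 : G))
    (hrel : X m = mfderiv IG IM (fun g : G => g • m) (1 : G) ξ)
    (γ : ℝ → G)
    (hγ_smooth : ContMDiff 𝓘(ℝ, ℝ) IG (⊤ : ℕ∞) γ)
    (hγ_one : γ 0 = 1)
    (hγ_hom : ∀ s t : ℝ, γ (s + t) = γ s * γ t)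
    (hγ_deriv : mfderiv 𝓘(ℝ, ℝ) IG γ 0 (1 : ℝ) = ξ) :
    ∀ τ : ℝ, γ τ ∈ Subgroup.normalizer (MulAction.stabilizer G m : Set G) :=
  one_parameter_subgroup_mem_normalizer_of_stabilizer_general hact X hX_smooth hX_equiv m ξ hrel γ
    hγ_smooth hγ_one hγ_hom hγ_deriv
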